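/- For any two connected graphs G and H, min{g(G), g(H)} ≤ g(G ⊠ H) ≤ g(G)·g(H), where g denotes the geodetic number. -/

import Mathlib

open SimpleGraph

/-- The strong product of two simple graphs. -/
def strongProd {α β : Type*} (G : SimpleGraph α) (H : SimpleGraph β) :
    SimpleGraph (α × β) where
  Adj x y := x ≠ y ∧ (x.1 = y.1 ∨ G.Adj x.1 y.1) ∧ (x.2 = y.2 ∨ H.Adj x.2 y.2)
  symm := by
    constructor
    rintro x y ⟨hne, h1, h2⟩
    exact ⟨hne.symm, h1.imp Eq.symm G.adj_symm, h2.imp Eq.symm H.adj_symm⟩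
  loopless := by constructor; rintro x ⟨hne, -, -⟩; exact hne rfl

/-- The closed geodesic interval between two vertices. -/
def interval {V : Type*} (G : SimpleGraph V) (u v : V) : Set V :=
  {w | G.dist u w + G.dist w v = G.dist u v}

/-- The geodetic closure of a set of vertices. -/
def intervalSet {V : Type*} (G : SimpleGraph V) (S : Set V) : Set V :=
  ⋃ u ∈ S, ⋃ v ∈ S, interval G u v

/-- A set is geodetic if its geodetic closure is the whole vertex set. -/
def IsGeodetic {V : Type*} (G : SimpleGraph V) (S : Set V) : Prop :=
  intervalSet G S = Set.univ

/-- A set is a hull set if iterating the interval operator yields everything. -/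
def IsHullSet {V : Type*} (G : SimpleGraph V) (S : Set V) : Prop :=
  ∃ r : ℕ, (intervalSet G)^[r] S = Set.univ

/-- The geodetic number. -/
noncomputable def geodeticNumber {V : Type*} (G : SimpleGraph V) : ℕ :=
  sInf {n : ℕ | ∃ S : Set V, S.ncard = n ∧ IsGeodetic G S}

/-- The hull number. -/
noncomputable def hullNumber {V : Type*} (G : SimpleGraph V) : ℕ :=
  sInf {n : ℕ | ∃ S : Set V, S.ncard = n ∧ IsHullSet G S}

/-- A vertex is simplicial if its neighborhood induces a complete graph. -/
def IsSimplicial {V : Type*} (G : SimpleGraph V) (v : V) : Prop :=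
  ∀ ⦃a b : V⦄, G.Adj v a → G.Adj v b → a ≠ b → G.Adj a b

/-!
Distances in `G ⊠ H` are maxima of the coordinate distances. Hence if a vertex `x` of the product
lies on a geodesic between `u` and `v`, one of its coordinates lies on a geodesic between the
coordinates of `u` and `v`; projecting a minimum geodetic set of `G ⊠ H` to that coordinate gives
the lower bound. Conversely, if `x.1 ∈ I[u₁, v₁]` and each distance from `x.2` to the ends
`u₂, v₂` is at most the corresponding distance from `x.1` to `u₁, v₁`, then `x ∈ I[u, v]`. Given
`x.1 ∈ I[u₁, v₁]` with `u₁, v₁ ∈ S` and `x.2 ∈ I[s, t]` with `s, t ∈ T`, the coordinate whose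
nearest end is closer is dominated by the other one, so `S × T` is geodetic.
-/

namespace SimpleGraph

variable {V W : Type*} {G : SimpleGraph V} {G' : SimpleGraph W}

lemma Walk.exists_walk_length_le_of_adj_or_eq (f : V → W)
    (hf : ∀ ⦃x y⦄, G.Adj x y → f x = f y ∨ G'.Adj (f x) (f y)) {x y : V}
    (p : G.Walk x y) :
    ∃ q : G'.Walk (f x) (f y), q.length ≤ p.length := by
  induction p with
  | nil => exact ⟨.nil, le_rfl⟩
  | @cons x z y h p ih =>
    obtain ⟨q, hq⟩ := ih
    rcases hf h with heq | hadj
    · exact ⟨q.copy heq.symm rfl, by simpa using hq.trans (Nat.le_succ _)⟩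
    · exact ⟨.cons hadj q, by simpa using hq⟩

lemma Reachable.dist_le_of_adj_or_eq (f : V → W)
    (hf : ∀ ⦃x y⦄, G.Adj x y → f x = f y ∨ G'.Adj (f x) (f y)) {x y : V}
    (h : G.Reachable x y) :
    G'.dist (f x) (f y) ≤ G.dist x y := by
  obtain ⟨p, hp⟩ := h.exists_walk_length_eq_dist
  obtain ⟨q, hq⟩ := p.exists_walk_length_le_of_adj_or_eq f hf
  exact (dist_le q).trans (hp ▸ hq)

end SimpleGraph

section StrongProd

variable {α β : Type*} {G : SimpleGraph α} {H : SimpleGraph β}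

def strongProdLeft (b : β) : G →g strongProd G H where
  toFun a := (a, b)
  map_rel' h := ⟨fun he => h.ne (congrArg Prod.fst he), Or.inr h, Or.inl rfl⟩

def strongProdRight (a : α) : H →g strongProd G H where
  toFun b := (a, b)
  map_rel' h := ⟨fun he => h.ne (congrArg Prod.snd he), Or.inl rfl, Or.inr h⟩

lemma strongProd_adj_of_adj_of_adj {a a' : α} {b b' : β} (h : G.Adj a a') (h' : H.Adj b b') :
    (strongProd G H).Adj (a, b) (a', b') :=
  ⟨fun he => h.ne (congrArg Prod.fst he), Or.inr h, Or.inr h'⟩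

lemma exists_strongProd_walk_length_eq_max {a a' : α} (p : G.Walk a a') :
    ∀ {b b' : β} (q : H.Walk b b'),
      ∃ w : (strongProd G H).Walk (a, b) (a', b'), w.length = max p.length q.length := by
  induction p with
  | nil => exact fun q => ⟨q.map (strongProdRight _), Walk.length_map _ q⟩
  | cons h p ih =>
    rintro _ _ (_ | ⟨h', q⟩)
    · exact ⟨(Walk.cons h p).map (strongProdLeft _), Walk.length_map _ _⟩
    · obtain ⟨w, hw⟩ := ih q
      exact ⟨.cons (strongProd_adj_of_adj_of_adj h h') w, by simp [hw, Nat.succ_max_succ]⟩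

lemma strongProd_dist (hG : G.Connected) (hH : H.Connected) (x y : α × β) :
    (strongProd G H).dist x y = max (G.dist x.1 y.1) (H.dist x.2 y.2) := by
  obtain ⟨p, hp⟩ := hG.exists_walk_length_eq_dist x.1 y.1
  obtain ⟨q, hq⟩ := hH.exists_walk_length_eq_dist x.2 y.2
  obtain ⟨w, hw⟩ := exists_strongProd_walk_length_eq_max p q
  refine le_antisymm (hp ▸ hq ▸ hw ▸ dist_le w) (max_le ?_ ?_)
  · exact w.reachable.dist_le_of_adj_or_eq Prod.fst fun _ _ (h : (strongProd G H).Adj _ _) => h.2.1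
  · exact w.reachable.dist_le_of_adj_or_eq Prod.snd fun _ _ (h : (strongProd G H).Adj _ _) => h.2.2

end StrongProd

section Interval

variable {V : Type*} {G : SimpleGraph V}

lemma mem_intervalSet {S : Set V} {x : V} :
    x ∈ intervalSet G S ↔ ∃ u ∈ S, ∃ v ∈ S, x ∈ interval G u v := by
  simp [intervalSet]

lemma interval_subset_interval_swap (u v : V) : interval G u v ⊆ interval G v u := by
  intro x hx
  have := G.dist_comm (u := u) (v := x)
  have := G.dist_comm (u := x) (v := v)
  have := G.dist_comm (u := u) (v := v)
  simp only [interval, Set.mem_ofPred_eq] at hx ⊢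
  omega

lemma interval_comm (u v : V) : interval G u v = interval G v u :=
  (interval_subset_interval_swap u v).antisymm (interval_subset_interval_swap v u)

lemma isGeodetic_univ : IsGeodetic G Set.univ :=
  Set.eq_univ_of_forall fun x =>
    (mem_intervalSet (S := Set.univ)).2 ⟨x, trivial, x, trivial, by simp [interval]⟩

lemma exists_isGeodetic_ncard_eq_geodeticNumber :
    ∃ S : Set V, S.ncard = geodeticNumber G ∧ IsGeodetic G S :=
  Nat.sInf_mem (s := {n | ∃ S : Set V, S.ncard = n ∧ IsGeodetic G S})
    ⟨_, Set.univ, rfl, isGeodetic_univ⟩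

lemma geodeticNumber_le_ncard {S : Set V} (h : IsGeodetic G S) : geodeticNumber G ≤ S.ncard :=
  Nat.sInf_le ⟨S, rfl, h⟩

end Interval

section StrongProdInterval

variable {α β : Type*} {G : SimpleGraph α} {H : SimpleGraph β}

lemma fst_mem_interval_or_snd_mem_interval (hG : G.Connected) (hH : H.Connected)
    {u v x : α × β} (hx : x ∈ interval (strongProd G H) u v) :
    x.1 ∈ interval G u.1 v.1 ∨ x.2 ∈ interval H u.2 v.2 := by
  have := hG.dist_triangle (u := u.1) (v := x.1) (w := v.1)
  have := hH.dist_triangle (u := u.2) (v := x.2) (w := v.2)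
  simp only [interval, Set.mem_ofPred_eq, strongProd_dist hG hH] at hx ⊢
  omega

lemma mem_interval_strongProd_of_fst (hG : G.Connected) (hH : H.Connected) {u v x : α × β}
    (hx : x.1 ∈ interval G u.1 v.1)
    (hu : H.dist u.2 x.2 ≤ G.dist u.1 x.1) (hv : H.dist x.2 v.2 ≤ G.dist x.1 v.1) :
    x ∈ interval (strongProd G H) u v := by
  have := hH.dist_triangle (u := u.2) (v := x.2) (w := v.2)
  simp only [interval, Set.mem_ofPred_eq, strongProd_dist hG hH] at hx ⊢
  omega

lemma mem_interval_strongProd_of_snd (hG : G.Connected) (hH : H.Connected) {u v x : α × β}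
    (hx : x.2 ∈ interval H u.2 v.2)
    (hu : G.dist u.1 x.1 ≤ H.dist u.2 x.2) (hv : G.dist x.1 v.1 ≤ H.dist x.2 v.2) :
    x ∈ interval (strongProd G H) u v := by
  have := hG.dist_triangle (u := u.1) (v := x.1) (w := v.1)
  simp only [interval, Set.mem_ofPred_eq, strongProd_dist hG hH] at hx ⊢
  omega

lemma IsGeodetic.fst_image_or_snd_image (hG : G.Connected) (hH : H.Connected)
    {W : Set (α × β)} (hW : IsGeodetic (strongProd G H) W) :
    IsGeodetic G (Prod.fst '' W) ∨ IsGeodetic H (Prod.snd '' W) := by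
  rw [or_iff_not_imp_left]
  intro hW₁
  obtain ⟨x₁, hx₁⟩ := (Set.ne_univ_iff_exists_notMem _).1 hW₁
  refine Set.eq_univ_of_forall fun x₂ => ?_
  obtain ⟨u, hu, v, hv, hx⟩ := mem_intervalSet.1 (hW ▸ Set.mem_univ (x₁, x₂))
  refine mem_intervalSet.2 ⟨u.2, ⟨u, hu, rfl⟩, v.2, ⟨v, hv, rfl⟩, ?_⟩
  refine (fst_mem_interval_or_snd_mem_interval hG hH hx).resolve_left fun h => hx₁ ?_
  exact mem_intervalSet.2 ⟨u.1, ⟨u, hu, rfl⟩, v.1, ⟨v, hv, rfl⟩, h⟩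

lemma IsGeodetic.prod (hG : G.Connected) (hH : H.Connected) {S : Set α} {T : Set β}
    (hS : IsGeodetic G S) (hT : IsGeodetic H T) :
    IsGeodetic (strongProd G H) (S ×ˢ T) := by
  refine Set.eq_univ_of_forall fun x => ?_
  obtain ⟨u, hu, v, hv, hx₁⟩ := mem_intervalSet.1 (hS ▸ Set.mem_univ x.1)
  obtain ⟨s, hs, t, ht, hx₂⟩ := mem_intervalSet.1 (hT ▸ Set.mem_univ x.2)
  wlog huv : G.dist u x.1 ≤ G.dist x.1 v generalizing u v
  · refine this v hv u hu (interval_comm u v ▸ hx₁) ?_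
    rw [G.dist_comm (u := v), G.dist_comm (u := x.1) (v := u)]
    omega
  wlog hst : H.dist s x.2 ≤ H.dist x.2 t generalizing s t
  · refine this t ht s hs (interval_comm s t ▸ hx₂) ?_
    rw [H.dist_comm (u := t), H.dist_comm (u := x.2) (v := s)]
    omega
  rcases le_or_gt (G.dist u x.1) (H.dist s x.2) with h | h
  · refine mem_intervalSet.2 ⟨(u, s), ⟨hu, hs⟩, (u, t), ⟨hu, ht⟩, ?_⟩
    exact mem_interval_strongProd_of_snd hG hH hx₂ h
      (show G.dist x.1 u ≤ H.dist x.2 t by rw [G.dist_comm]; omega)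
  · refine mem_intervalSet.2 ⟨(u, s), ⟨hu, hs⟩, (v, s), ⟨hv, hs⟩, ?_⟩
    exact mem_interval_strongProd_of_fst hG hH hx₁ h.le
      (show H.dist x.2 s ≤ G.dist x.1 v by rw [H.dist_comm]; omega)

end StrongProdInterval

theorem strongProd_geodeticNumber_bounds {α β : Type*} [Fintype α] [Fintype β]
    (G : SimpleGraph α) (H : SimpleGraph β) (hG : G.Connected) (hH : H.Connected) :
    min (geodeticNumber G) (geodeticNumber H) ≤ geodeticNumber (strongProd G H) ∧
      geodeticNumber (strongProd G H) ≤ geodeticNumber G * geodeticNumber H := by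
  constructor
  · obtain ⟨W, hW, hWgeo⟩ := exists_isGeodetic_ncard_eq_geodeticNumber (G := strongProd G H)
    rw [← hW]
    rcases IsGeodetic.fst_image_or_snd_image hG hH hWgeo with h | h
    · exact (min_le_left _ _).trans
        ((geodeticNumber_le_ncard h).trans (Set.ncard_image_le W.toFinite))
    · exact (min_le_right _ _).trans
        ((geodeticNumber_le_ncard h).trans (Set.ncard_image_le W.toFinite))
  · obtain ⟨S, hS, hSgeo⟩ := exists_isGeodetic_ncard_eq_geodeticNumber (G := G)
    obtain ⟨T, hT, hTgeo⟩ := exists_isGeodetic_ncard_eq_geodeticNumber (G := H)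
    calc geodeticNumber (strongProd G H) ≤ (S ×ˢ T).ncard :=
          geodeticNumber_le_ncard (IsGeodetic.prod hG hH hSgeo hTgeo)
      _ = geodeticNumber G * geodeticNumber H := by rw [Set.ncard_prod, hS, hT]
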